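/- Fix μ > 0 and n ≥ 1, and let q(x,t) = ∫₀^∞ (2πs)^(−n/2) e^(−‖x‖²/(2s)) · s^(μ−1) e^(−s/t) / (t^μ Γ(μ)) ds for x ∈ ℝⁿ and t > 0 be the density of the n-dimensional process (B¹(G₁(t)), …, Bⁿ(G₁(t))). Then q satisfies the partial differential equation 4 ∂q/∂t = (2μ − n) Δq − Δ( x · ∇q ) for all x ∈ ℝⁿ with x ≠ 0 and t > 0, where Δ = Σ_{i=1}^n ∂²/∂x_i² is the Laplacian and x · ∇q = Σ_{i=1}^n x_i ∂q/∂x_i. -/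

import Mathlib

open MeasureTheory

/-- The partial derivative `∂f/∂x_i` of a function on `ℝⁿ`. -/
noncomputable def pd {n : ℕ} (f : (Fin n → ℝ) → ℝ) (i : Fin n) (x : Fin n → ℝ) : ℝ :=
  deriv (fun y => f (Function.update x i y)) (x i)

/-- The Laplacian `Δf = Σᵢ ∂²f/∂x_i²` of a function on `ℝⁿ`. -/
noncomputable def lap {n : ℕ} (f : (Fin n → ℝ) → ℝ) (x : Fin n → ℝ) : ℝ :=
  ∑ i, pd (pd f i) i x

/-- The density of the `n`-dimensional process `(B¹(G₁(t)), …, Bⁿ(G₁(t)))`: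
`q(x,t) = ∫₀^∞ (2πs)^(−n/2) e^(−‖x‖²/(2s)) · s^(μ−1) e^(−s/t)/(t^μ Γ(μ)) ds`. -/
noncomputable def qn (n : ℕ) (μ : ℝ) (x : Fin n → ℝ) (t : ℝ) : ℝ :=
  ∫ s in Set.Ioi (0:ℝ),
    (2 * Real.pi * s) ^ (-(n : ℝ) / 2) * Real.exp (-(∑ i, (x i) ^ 2) / (2 * s)) *
      (s ^ (μ - 1) * Real.exp (-s / t) / (t ^ μ * Real.Gamma μ))

/-!
With `S = ∑ xᵢ²`, the integrand factorises and `q(x,t) = c t^(-μ) J_{μ-1-n/2}(S, t)`,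
where `J_b(r,t) = ∫₀^∞ s^b e^(-r/(2s) - s/t) ds`. Differentiating under the integral sign
gives `∂_r J_b = -J_{b-1}/2` and `∂_t J_b = t⁻² J_{b+1}`, and integrating
`d/ds (s^b e^(-r/(2s) - s/t))` over `(0, ∞)` gives the recurrence
`J_b / t = b J_{b-1} + (r/2) J_{b-2}`. For a radial function `G(S)` one has
`Δ = 2n G' + 4S G''` and `x · ∇ = 2S G'`, so both sides of the equation are linear
combinations of `J_{b+1}, …, J_{b-3}` at `(S, t)`, and three instances of the recurrence
match them.
-/

open Real Set Filter Topology Finset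
open scoped Nat

theorem integral_Ioi_of_hasDerivAt_of_tendsto_nhdsGT {f f' : ℝ → ℝ} {a l₀ l₁ : ℝ}
    (hderiv : ∀ x ∈ Ioi a, HasDerivAt f (f' x) x) (f'int : IntegrableOn f' (Ioi a))
    (h_zero : Tendsto f (𝓝[>] a) (𝓝 l₀)) (h_infty : Tendsto f atTop (𝓝 l₁)) :
    ∫ x in Ioi a, f' x = l₁ - l₀ := by
  rw [← Ici_sdiff_left] at h_zero
  have hderiv' : ∀ x ∈ Ioi a, HasDerivAt (Function.update f a l₀) (f' x) x := fun x hx =>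
    (hderiv x hx).congr_of_eventuallyEq <| by
      filter_upwards [eventually_ne_nhds (ne_of_gt hx)] with y hy
      exact Function.update_of_ne hy l₀ f
  have h_infty' : Tendsto (Function.update f a l₀) atTop (𝓝 l₁) := h_infty.congr' <| by
    filter_upwards [eventually_ne_atTop a] with x hx
    exact (Function.update_of_ne hx l₀ f).symm
  simpa using integral_Ioi_of_hasDerivAt_of_tendsto
    (continuousWithinAt_update_same.mpr h_zero) hderiv' f'int h_infty'

theorem exp_neg_le_factorial_div_pow (m : ℕ) {x : ℝ} (hx : 0 < x) :
    exp (-x) ≤ m ! / x ^ m := by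
  rw [exp_neg, inv_le_comm₀ (exp_pos x) (by positivity), inv_div]
  exact pow_div_factorial_le_exp x hx.le m

-- Unnormalised generalised inverse Gaussian density; `gigIntegral` is a Bessel-K integral.
noncomputable def gigKernel (b r t s : ℝ) : ℝ := s ^ b * exp (-(r / (2 * s)) - s / t)

noncomputable def gigIntegral (b r t : ℝ) : ℝ := ∫ s in Ioi 0, gigKernel b r t s

section Kernel

variable {b r t s : ℝ}

theorem gigKernel_pos (hs : 0 < s) : 0 < gigKernel b r t s := by
  unfold gigKernel; positivity

theorem continuousOn_gigKernel : ContinuousOn (gigKernel b r t) (Ioi 0) := by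
  intro s hs
  have hs : s ≠ 0 := ne_of_gt hs
  refine ContinuousAt.continuousWithinAt ?_
  unfold gigKernel
  fun_prop (disch := simp [hs])

theorem gigKernel_le_rpow_mul_exp (m : ℕ) (hr : 0 < r) (hs : 0 < s) :
    gigKernel b r t s ≤ m ! * (2 / r) ^ m * (s ^ (b + m) * exp (-(s / t))) := by
  have hexp : exp (-(r / (2 * s))) ≤ m ! * (2 / r) ^ m * s ^ m := by
    refine (exp_neg_le_factorial_div_pow m (by positivity)).trans_eq ?_
    rw [div_eq_mul_inv, ← inv_pow, inv_div, mul_assoc, ← mul_pow]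
    congr 2
    ring
  calc gigKernel b r t s = s ^ b * exp (-(r / (2 * s))) * exp (-(s / t)) := by
        rw [gigKernel, sub_eq_add_neg, exp_add, mul_assoc]
    _ ≤ s ^ b * (m ! * (2 / r) ^ m * s ^ m) * exp (-(s / t)) := by gcongr
    _ = m ! * (2 / r) ^ m * (s ^ (b + m) * exp (-(s / t))) := by
        rw [rpow_add hs, rpow_natCast]; ring

theorem hasDerivAt_gigKernel (hs : 0 < s) :
    HasDerivAt (gigKernel b r t)
      (b * gigKernel (b - 1) r t s + r / 2 * gigKernel (b - 1 - 1) r t s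
        - t⁻¹ * gigKernel b r t s) s := by
  have hpow : HasDerivAt (fun s => s ^ b) (b * s ^ (b - 1)) s :=
    hasDerivAt_rpow_const (Or.inl hs.ne')
  have hexponent : HasDerivAt (fun s => -(r / (2 * s)) - s / t)
      (-(r / 2) * -(s ^ 2)⁻¹ - t⁻¹ * 1) s := by
    refine (((hasDerivAt_inv hs.ne').const_mul (-(r / 2))).sub
      ((hasDerivAt_id s).const_mul t⁻¹)).congr_of_eventuallyEq (.of_forall fun u => ?_)
    simp only [Pi.sub_apply, id]
    ring
  refine (hpow.mul hexponent.exp).congr_deriv ?_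
  simp only [gigKernel, rpow_sub_one hs.ne']
  field_simp
  ring

theorem hasDerivAt_gigKernel_r (hs : 0 < s) :
    HasDerivAt (fun r => gigKernel b r t s) (-(1 / 2) * gigKernel (b - 1) r t s) r := by
  have hexponent : HasDerivAt (fun r => -(r / (2 * s)) - s / t) (-(1 / (2 * s))) r := by
    simpa using ((hasDerivAt_id r).div_const (2 * s)).neg.sub_const (s / t)
  refine (hexponent.exp.const_mul (s ^ b)).congr_deriv ?_
  simp only [gigKernel, rpow_sub_one hs.ne']
  field_simp

theorem hasDerivAt_gigKernel_t (hs : 0 < s) (ht : t ≠ 0) :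
    HasDerivAt (fun t => gigKernel b r t s) ((t ^ 2)⁻¹ * gigKernel (b + 1) r t s) t := by
  have hexponent : HasDerivAt (fun t => -(r / (2 * s)) - s / t) (-(s * -(t ^ 2)⁻¹)) t := by
    refine (((hasDerivAt_inv ht).const_mul s).neg.const_add (-(r / (2 * s))))
      |>.congr_of_eventuallyEq (.of_forall fun u => ?_)
    simp only [Pi.neg_apply]
    ring
  refine (hexponent.exp.const_mul (s ^ b)).congr_deriv ?_
  simp only [gigKernel, rpow_add_one hs.ne']
  field_simp

theorem gigKernel_antitone_r (hs : 0 < s) : Antitone (fun r => gigKernel b r t s) := by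
  intro r₁ r₂ hr
  simp only [gigKernel]
  gcongr

theorem gigKernel_monotoneOn_t (hs : 0 < s) :
    MonotoneOn (fun t => gigKernel b r t s) (Ioi 0) := by
  intro t₁ (ht₁ : 0 < t₁) t₂ _ ht
  simp only [gigKernel]
  gcongr

variable (b)

theorem integrableOn_gigKernel (hr : 0 < r) (ht : 0 < t) :
    IntegrableOn (gigKernel b r t) (Ioi 0) := by
  set m := ⌈-b⌉₊ + 1
  have hbm : -1 < b + m := by
    have := Nat.le_ceil (-b); push_cast [m]; linarith
  have hdom : IntegrableOn (fun s => m ! * (2 / r) ^ m * (s ^ (b + m) * exp (-(s / t))))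
      (Ioi 0) := by
    have := integrableOn_rpow_mul_exp_neg_mul_rpow hbm one_pos (inv_pos.2 ht)
    simp only [rpow_one, neg_mul, ← div_eq_inv_mul] at this
    exact this.const_mul _
  refine hdom.mono' (continuousOn_gigKernel.aestronglyMeasurable measurableSet_Ioi) ?_
  filter_upwards [ae_restrict_mem measurableSet_Ioi] with s hs
  rw [norm_of_nonneg (gigKernel_pos hs).le]
  exact gigKernel_le_rpow_mul_exp m hr hs

theorem tendsto_gigKernel_atTop (hr : 0 ≤ r) (ht : 0 < t) :
    Tendsto (gigKernel b r t) atTop (𝓝 0) := by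
  refine squeeze_zero' ?_ ?_ (tendsto_rpow_mul_exp_neg_mul_atTop_nhds_zero b t⁻¹ (inv_pos.2 ht))
  · filter_upwards [eventually_gt_atTop 0] with s hs using (gigKernel_pos hs).le
  · filter_upwards [eventually_gt_atTop 0] with s hs
    unfold gigKernel
    gcongr
    have : 0 ≤ r / (2 * s) := by positivity
    rw [neg_mul, ← div_eq_inv_mul]; linarith

theorem tendsto_gigKernel_nhdsGT_zero (hr : 0 < r) (ht : 0 ≤ t) :
    Tendsto (gigKernel b r t) (𝓝[>] 0) (𝓝 0) := by
  set m := ⌈-b⌉₊ + 1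
  have hbm : 0 < b + m := by
    have := Nat.le_ceil (-b); push_cast [m]; linarith
  have hdom : Tendsto (fun s : ℝ => m ! * (2 / r) ^ m * s ^ (b + m)) (𝓝[>] 0) (𝓝 0) := by
    have := ((continuousAt_rpow_const 0 (b + m) (Or.inr hbm.le)).tendsto).mono_left
      (nhdsWithin_le_nhds (s := Ioi 0))
    simpa [zero_rpow hbm.ne'] using this.const_mul (m ! * (2 / r) ^ m)
  refine squeeze_zero' ?_ ?_ hdom
  · filter_upwards [self_mem_nhdsWithin] with s hs using (gigKernel_pos hs).le
  · filter_upwards [self_mem_nhdsWithin] with s (hs : 0 < s)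
    refine (gigKernel_le_rpow_mul_exp m hr hs).trans ?_
    have : exp (-(s / t)) ≤ 1 := exp_le_one_iff.2 (neg_nonpos.2 (by positivity))
    have : 0 ≤ s ^ (b + m) := by positivity
    gcongr
    nlinarith

end Kernel

section Integral

variable {r t : ℝ}

-- Indices are written `b - 1 - 1`, not `b - 2`, so that the instances at `b` and `b - 1` share
-- their terms syntactically when combined by `linear_combination`.
theorem gigIntegral_recurrence (b : ℝ) (hr : 0 < r) (ht : 0 < t) :
    t⁻¹ * gigIntegral b r t
      = b * gigIntegral (b - 1) r t + r / 2 * gigIntegral (b - 1 - 1) r t := by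
  have h₀ := (integrableOn_gigKernel b hr ht).const_mul t⁻¹
  have h₁ := (integrableOn_gigKernel (b - 1) hr ht).const_mul b
  have h₂ := (integrableOn_gigKernel (b - 1 - 1) hr ht).const_mul (r / 2)
  have h₁₂ : IntegrableOn
      (fun s => b * gigKernel (b - 1) r t s + r / 2 * gigKernel (b - 1 - 1) r t s) (Ioi 0) :=
    h₁.add h₂
  have key := integral_Ioi_of_hasDerivAt_of_tendsto_nhdsGT (fun s hs => hasDerivAt_gigKernel hs)
    (h₁₂.sub h₀) (tendsto_gigKernel_nhdsGT_zero b hr ht.le)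
    (tendsto_gigKernel_atTop b hr.le ht)
  rw [integral_sub h₁₂ h₀, integral_add h₁ h₂, integral_const_mul, integral_const_mul,
    integral_const_mul] at key
  unfold gigIntegral
  linarith

theorem hasDerivAt_gigIntegral_r (b : ℝ) (hr : 0 < r) (ht : 0 < t) :
    HasDerivAt (fun r => gigIntegral b r t) (-(1 / 2) * gigIntegral (b - 1) r t) r := by
  have key := hasDerivAt_integral_of_dominated_loc_of_deriv_le (μ := volume.restrict (Ioi 0))
    (F := fun r s => gigKernel b r t s) (F' := fun r s => -(1 / 2) * gigKernel (b - 1) r t s)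
    (bound := fun s => 1 / 2 * gigKernel (b - 1) (r / 2) t s)
    (Ioi_mem_nhds (half_lt_self hr))
    (.of_forall fun _ => continuousOn_gigKernel.aestronglyMeasurable measurableSet_Ioi)
    (integrableOn_gigKernel b hr ht)
    ((continuousOn_gigKernel.aestronglyMeasurable measurableSet_Ioi).const_mul _)
    ?_ ((integrableOn_gigKernel (b - 1) (half_pos hr) ht).const_mul _) ?_
  · simpa only [gigIntegral, integral_const_mul] using key.2
  · filter_upwards [ae_restrict_mem measurableSet_Ioi] with s (hs : 0 < s) r' (hr' : r / 2 < r')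
    rw [norm_mul, norm_of_nonneg (gigKernel_pos hs).le]
    norm_num
    exact gigKernel_antitone_r hs hr'.le
  · filter_upwards [ae_restrict_mem measurableSet_Ioi] with s hs r' _
    exact hasDerivAt_gigKernel_r hs

theorem hasDerivAt_gigIntegral_t (b : ℝ) (hr : 0 < r) (ht : 0 < t) :
    HasDerivAt (fun t => gigIntegral b r t) ((t ^ 2)⁻¹ * gigIntegral (b + 1) r t) t := by
  have key := hasDerivAt_integral_of_dominated_loc_of_deriv_le (μ := volume.restrict (Ioi 0))
    (F := fun t s => gigKernel b r t s) (F' := fun t s => (t ^ 2)⁻¹ * gigKernel (b + 1) r t s)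
    (bound := fun s => ((t / 2) ^ 2)⁻¹ * gigKernel (b + 1) r (2 * t) s)
    (Ioo_mem_nhds (half_lt_self ht) (show t < 2 * t by linarith))
    (.of_forall fun _ => continuousOn_gigKernel.aestronglyMeasurable measurableSet_Ioi)
    (integrableOn_gigKernel b hr ht)
    ((continuousOn_gigKernel.aestronglyMeasurable measurableSet_Ioi).const_mul _)
    ?_ ((integrableOn_gigKernel (b + 1) hr (by linarith)).const_mul _) ?_
  · simpa only [gigIntegral, integral_const_mul] using key.2
  · filter_upwards [ae_restrict_mem measurableSet_Ioi] with s (hs : 0 < s) t' ⟨ht₁, ht₂⟩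
    have ht' : 0 < t' := (half_pos ht).trans ht₁
    rw [norm_mul, norm_of_nonneg (gigKernel_pos hs).le, norm_inv, norm_pow, norm_of_nonneg ht'.le]
    gcongr
    · exact (gigKernel_pos hs).le
    · exact gigKernel_monotoneOn_t hs ht' (show (0 : ℝ) < 2 * t by linarith) ht₂.le
  · filter_upwards [ae_restrict_mem measurableSet_Ioi] with s hs t' ⟨ht₁, _⟩
    exact hasDerivAt_gigKernel_t hs ((half_pos ht).trans ht₁).ne'

end Integral

section Radial

variable {n : ℕ}

theorem pd_congr {f g : (Fin n → ℝ) → ℝ} {x : Fin n → ℝ} (h : f =ᶠ[𝓝 x] g) (i : Fin n) :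
    pd f i x = pd g i x := by
  have hupdate : Tendsto (Function.update x i) (𝓝 (x i)) (𝓝 x) := by
    simpa using ((continuous_const (y := x)).update i continuous_id).tendsto (x i)
  exact (h.comp_tendsto hupdate).deriv_eq

theorem hasDerivAt_sum_sq_update (x : Fin n → ℝ) (i : Fin n) :
    HasDerivAt (fun y => ∑ j, Function.update x i y j ^ 2) (2 * x i) (x i) := by
  have hsplit (y : ℝ) :
      ∑ j, Function.update x i y j ^ 2 = y ^ 2 + ∑ j ∈ univ.erase i, x j ^ 2 := by
    rw [← add_sum_erase _ _ (mem_univ i), Function.update_self]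
    congr 1
    exact sum_congr rfl fun j hj => by rw [Function.update_of_ne (ne_of_mem_erase hj)]
  simp_rw [hsplit]
  simpa using (hasDerivAt_pow 2 (x i)).add_const (∑ j ∈ univ.erase i, x j ^ 2)

theorem pd_comp_sum_sq {G : ℝ → ℝ} {G' : ℝ} {x : Fin n → ℝ}
    (hG : HasDerivAt G G' (∑ j, x j ^ 2)) (i : Fin n) :
    pd (fun z => G (∑ j, z j ^ 2)) i x = 2 * x i * G' := by
  have h := hG.comp_of_eq (x i) (hasDerivAt_sum_sq_update x i) (by simp)
  rw [pd]
  exact h.deriv.trans (by ring)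

theorem pd_mul_comp_sum_sq {G : ℝ → ℝ} {G' : ℝ} {x : Fin n → ℝ}
    (hG : HasDerivAt G G' (∑ j, x j ^ 2)) (i : Fin n) :
    pd (fun z => z i * G (∑ j, z j ^ 2)) i x = G (∑ j, x j ^ 2) + 2 * x i ^ 2 * G' := by
  have h := (hasDerivAt_id (x i)).mul
    (hG.comp_of_eq (x i) (hasDerivAt_sum_sq_update x i) (by simp))
  simp only [pd, Function.update_self]
  refine h.deriv.trans ?_
  simp only [Function.comp_apply, Function.update_eq_self, id]
  ring

theorem isOpen_sum_sq_pos : IsOpen {z : Fin n → ℝ | 0 < ∑ j, z j ^ 2} :=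
  isOpen_lt continuous_const (by fun_prop)

variable {f : (Fin n → ℝ) → ℝ} {G G' : ℝ → ℝ} {x : Fin n → ℝ}

theorem pd_eq_of_radial (hf : ∀ z, 0 < ∑ j, z j ^ 2 → f z = G (∑ j, z j ^ 2))
    (hG : ∀ ρ, 0 < ρ → HasDerivAt G (G' ρ) ρ) (hx : 0 < ∑ j, x j ^ 2) (i : Fin n) :
    pd f i x = 2 * x i * G' (∑ j, x j ^ 2) := by
  have hfG : f =ᶠ[𝓝 x] fun z => G (∑ j, z j ^ 2) := by
    filter_upwards [isOpen_sum_sq_pos.mem_nhds hx] with z hz using hf z hz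
  rw [pd_congr hfG, pd_comp_sum_sq (hG _ hx)]

theorem sum_mul_pd_eq_of_radial (hf : ∀ z, 0 < ∑ j, z j ^ 2 → f z = G (∑ j, z j ^ 2))
    (hG : ∀ ρ, 0 < ρ → HasDerivAt G (G' ρ) ρ) (hx : 0 < ∑ j, x j ^ 2) :
    ∑ i, x i * pd f i x = 2 * (∑ j, x j ^ 2) * G' (∑ j, x j ^ 2) := by
  simp_rw [pd_eq_of_radial hf hG hx, mul_sum, sum_mul]
  exact sum_congr rfl fun i _ => by ring

theorem lap_eq_of_radial (hf : ∀ z, 0 < ∑ j, z j ^ 2 → f z = G (∑ j, z j ^ 2))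
    (hG : ∀ ρ, 0 < ρ → HasDerivAt G (G' ρ) ρ) {G'' : ℝ}
    (hG' : HasDerivAt G' G'' (∑ j, x j ^ 2)) (hx : 0 < ∑ j, x j ^ 2) :
    lap f x = 2 * n * G' (∑ j, x j ^ 2) + 4 * (∑ j, x j ^ 2) * G'' := by
  have hpd (i : Fin n) : pd f i =ᶠ[𝓝 x] fun z => z i * (2 * G' (∑ j, z j ^ 2)) := by
    filter_upwards [isOpen_sum_sq_pos.mem_nhds hx] with z hz
    rw [pd_eq_of_radial hf hG hz]; ring
  simp_rw [lap, pd_congr (hpd _), pd_mul_comp_sum_sq (hG'.const_mul 2), sum_add_distrib,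
    ← sum_mul, ← mul_sum, sum_const, card_univ, Fintype.card_fin, nsmul_eq_mul]
  ring

end Radial

section RadialGig

variable {n : ℕ} {t : ℝ} (A b : ℝ)

theorem lap_const_mul_gigIntegral (ht : 0 < t) {x : Fin n → ℝ} (hx : 0 < ∑ j, x j ^ 2) :
    lap (fun z => A * gigIntegral b (∑ j, z j ^ 2) t) x
      = A * ((∑ j, x j ^ 2) * gigIntegral (b - 1 - 1) (∑ j, x j ^ 2) t
          - n * gigIntegral (b - 1) (∑ j, x j ^ 2) t) := by
  rw [lap_eq_of_radial (fun _ _ => rfl)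
    (fun ρ hρ => (hasDerivAt_gigIntegral_r b hρ ht).const_mul A)
    (((hasDerivAt_gigIntegral_r (b - 1) hx ht).const_mul (-(1 / 2))).const_mul A) hx]
  ring

theorem sum_mul_pd_const_mul_gigIntegral (ht : 0 < t) {x : Fin n → ℝ}
    (hx : 0 < ∑ j, x j ^ 2) :
    ∑ i, x i * pd (fun z => A * gigIntegral b (∑ j, z j ^ 2) t) i x
      = -A * (∑ j, x j ^ 2) * gigIntegral (b - 1) (∑ j, x j ^ 2) t := by
  rw [sum_mul_pd_eq_of_radial (fun _ _ => rfl)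
    (fun ρ hρ => (hasDerivAt_gigIntegral_r b hρ ht).const_mul A) hx]
  ring

theorem lap_sum_mul_pd_const_mul_gigIntegral (ht : 0 < t) {x : Fin n → ℝ}
    (hx : 0 < ∑ j, x j ^ 2) :
    lap (fun y => ∑ i, y i * pd (fun z => A * gigIntegral b (∑ j, z j ^ 2) t) i y) x
      = A * ((n + 4) * (∑ j, x j ^ 2) * gigIntegral (b - 1 - 1) (∑ j, x j ^ 2) t
          - 2 * n * gigIntegral (b - 1) (∑ j, x j ^ 2) t
          - (∑ j, x j ^ 2) ^ 2 * gigIntegral (b - 1 - 1 - 1) (∑ j, x j ^ 2) t) := by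
  have hJ (c : ℝ) {ρ : ℝ} (hρ : 0 < ρ) := hasDerivAt_gigIntegral_r c hρ ht
  have hG (ρ : ℝ) (hρ : 0 < ρ) : HasDerivAt (fun r => -A * r * gigIntegral (b - 1) r t)
      (-A * (gigIntegral (b - 1) ρ t - ρ / 2 * gigIntegral (b - 1 - 1) ρ t)) ρ :=
    (((hasDerivAt_id ρ).const_mul (-A)).mul (hJ (b - 1) hρ)).congr_deriv (by simp only [id]; ring)
  have hG' := (((hJ (b - 1) hx).sub (((hasDerivAt_id _).div_const 2).mul
    (hJ (b - 1 - 1) hx))).const_mul (-A))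
  rw [lap_eq_of_radial (fun z hz => sum_mul_pd_const_mul_gigIntegral A b ht hz) hG hG' hx]
  simp only [id]
  ring

end RadialGig

theorem qn_eq_gigIntegral (n : ℕ) (μ : ℝ) (x : Fin n → ℝ) {t : ℝ} (ht : 0 < t) :
    qn n μ x t = (2 * π) ^ (-(n : ℝ) / 2) / Gamma μ * t ^ (-μ)
      * gigIntegral (μ - 1 - n / 2) (∑ i, x i ^ 2) t := by
  rw [qn, gigIntegral, ← integral_const_mul]
  refine setIntegral_congr_fun measurableSet_Ioi fun s (hs : 0 < s) => ?_
  rw [gigKernel, mul_rpow (by positivity) hs.le, rpow_neg ht.le,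
    show μ - 1 - n / 2 = -(n : ℝ) / 2 + (μ - 1) by ring, rpow_add hs,
    show -((∑ i, x i ^ 2) / (2 * s)) - s / t = -(∑ i, x i ^ 2) / (2 * s) + -s / t by ring,
    exp_add]
  field_simp

theorem hasDerivAt_qn (n : ℕ) (μ : ℝ) {x : Fin n → ℝ} (hx : 0 < ∑ i, x i ^ 2) {t : ℝ}
    (ht : 0 < t) :
    HasDerivAt (fun τ => qn n μ x τ) ((2 * π) ^ (-(n : ℝ) / 2) / Gamma μ * t ^ (-μ)
      * ((t ^ 2)⁻¹ * gigIntegral (μ - 1 - n / 2 + 1) (∑ i, x i ^ 2) t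
        - μ * t⁻¹ * gigIntegral (μ - 1 - n / 2) (∑ i, x i ^ 2) t)) t := by
  have hqn : (fun τ => (2 * π) ^ (-(n : ℝ) / 2) / Gamma μ * τ ^ (-μ)
      * gigIntegral (μ - 1 - n / 2) (∑ i, x i ^ 2) τ) =ᶠ[𝓝 t] fun τ => qn n μ x τ := by
    filter_upwards [Ioi_mem_nhds ht] with τ hτ using (qn_eq_gigIntegral n μ x hτ).symm
  refine ((((hasDerivAt_rpow_const (Or.inl ht.ne')).const_mul _).mul
    (hasDerivAt_gigIntegral_t _ hx ht)).congr_of_eventuallyEq hqn.symm).congr_deriv ?_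
  rw [rpow_sub_one ht.ne']
  ring

theorem stmt_16_general (μ : ℝ) (n : ℕ) :
    ∀ (x : Fin n → ℝ) (t : ℝ), x ≠ 0 → 0 < t →
      4 * deriv (fun τ => qn n μ x τ) t
        = (2 * μ - n) * lap (fun y => qn n μ y t) x
          - lap (fun y => ∑ i, y i * pd (fun z => qn n μ z t) i y) x := by
  intro x t hx ht
  have hR : 0 < ∑ i, x i ^ 2 := by
    obtain ⟨i, hi⟩ := Function.ne_iff.1 hx
    exact sum_pos' (fun j _ => sq_nonneg (x j)) ⟨i, mem_univ i, pow_two_pos_of_ne_zero hi⟩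
  have hq : (fun y => qn n μ y t) = fun y => (2 * π) ^ (-(n : ℝ) / 2) / Gamma μ * t ^ (-μ)
      * gigIntegral (μ - 1 - n / 2) (∑ i, y i ^ 2) t :=
    funext fun y => qn_eq_gigIntegral n μ y ht
  rw [(hasDerivAt_qn n μ hR ht).deriv, hq, lap_const_mul_gigIntegral _ _ ht hR,
    lap_sum_mul_pd_const_mul_gigIntegral _ _ ht hR]
  have E₀ := gigIntegral_recurrence (μ - 1 - n / 2 + 1) hR ht
  have E₁ := gigIntegral_recurrence (μ - 1 - n / 2) hR ht
  have E₂ := gigIntegral_recurrence (μ - 1 - n / 2 - 1) hR ht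
  rw [add_sub_cancel_right] at E₀
  set A := (2 * π) ^ (-(n : ℝ) / 2) / Gamma μ * t ^ (-μ)
  set R := ∑ i, x i ^ 2
  linear_combination (4 * A * t⁻¹) * E₀ - (2 * n * A) * E₁ + (2 * R * A) * E₂

/-- the density of `(B¹(G₁(t)), …, Bⁿ(G₁(t)))` satisfies the p.d.e.
`4 ∂q/∂t = (2μ − n) Δq − Δ(x · ∇q)` for `x ≠ 0`, `t > 0`. -/
theorem stmt_16 (μ : ℝ) (hμ : 0 < μ) (n : ℕ) (hn : 1 ≤ n) :
    ∀ (x : Fin n → ℝ) (t : ℝ), x ≠ 0 → 0 < t →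
      4 * deriv (fun τ => qn n μ x τ) t
        = (2 * μ - n) * lap (fun y => qn n μ y t) x
          - lap (fun y => ∑ i, y i * pd (fun z => qn n μ z t) i y) x :=
  stmt_16_general μ n
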